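/- (Marcinkiewicz SLLN, case 0 < p < 1) Let {X_n} be i.i.d. random variables in a sub-linear expectation space whose upper capacity 𝕍 is countably sub-additive. If 0 < p < 1 and C_𝕍(|X_1|^p) < ∞, then S_n/n^{1/p} → 0 almost surely with respect to 𝕍, where S_n = X_1 + … + X_n. -/

import Mathlib

open Filter

/-- A (real-valued) sub-linear expectation on the space of all random variables `Ω → ℝ`. -/
structure SubLinearExpectation (Ω : Type*) where
  E : (Ω → ℝ) → ℝ
  mono : ∀ ⦃X Y : Ω → ℝ⦄, (∀ ω, X ω ≤ Y ω) → E X ≤ E Y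
  constPres : ∀ c : ℝ, E (fun _ => c) = c
  subadd : ∀ X Y : Ω → ℝ, E (fun ω => X ω + Y ω) ≤ E X + E Y
  posHomog : ∀ l : ℝ, 0 ≤ l → ∀ X : Ω → ℝ, E (fun ω => l * X ω) = l * E X

/-- The conjugate (lower) expectation `Ẽ[X] := -Ê[-X]`. -/
def conjExpectation {Ω : Type*} (sl : SubLinearExpectation Ω) (X : Ω → ℝ) : ℝ :=
  -sl.E (fun ω => -X ω)

/-- The upper capacity `𝕍(A) = inf { Ê[ξ] : I_A ≤ ξ }`. -/
noncomputable def upperCapacity {Ω : Type*} (sl : SubLinearExpectation Ω) (A : Set Ω) : ℝ :=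
  sInf {r : ℝ | ∃ ξ : Ω → ℝ, (∀ ω, A.indicator (fun _ => (1 : ℝ)) ω ≤ ξ ω) ∧ sl.E ξ = r}

/-- `𝕍` is countably sub-additive. -/
def CountablySubAdditive {Ω : Type*} (V : Set Ω → ℝ) : Prop :=
  ∀ A : ℕ → Set Ω, V (⋃ n, A n) ≤ ∑' n, V (A n)

/-- A test function in `C_{l,Lip}(ℝⁱ × ℝ)`: local Lipschitz of polynomial growth. -/
def IsCLlip {i : ℕ} (φ : (Fin i → ℝ) × ℝ → ℝ) : Prop :=
  ∃ C : ℝ, 0 < C ∧ ∃ m : ℕ, ∀ x y : (Fin i → ℝ) × ℝ,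
    |φ x - φ y| ≤ C * (1 + ‖x‖ ^ m + ‖y‖ ^ m) * ‖x - y‖

/-- `{X_n}` is an independent sequence under `Ê`: for each `i`, `X_i` is independent of
`(X_0, …, X_{i-1})`, in the sense of Peng (via `C_{l,Lip}` test functions). -/
def IndepSeq {Ω : Type*} (sl : SubLinearExpectation Ω) (X : ℕ → Ω → ℝ) : Prop :=
  ∀ i : ℕ, ∀ φ : (Fin i → ℝ) × ℝ → ℝ, IsCLlip φ →
    sl.E (fun ω => φ (fun k => X k.1 ω, X i ω)) =
      sl.E (fun ω => sl.E (fun ω' => φ (fun k => X k.1 ω, X i ω')))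

/-- A one-dimensional test function in `C_{l,Lip}(ℝ)`. -/
def IsCLlip1 (φ : ℝ → ℝ) : Prop :=
  ∃ C : ℝ, 0 < C ∧ ∃ m : ℕ, ∀ x y : ℝ,
    |φ x - φ y| ≤ C * (1 + |x| ^ m + |y| ^ m) * |x - y|

/-- The sequence `{X_n}` is identically distributed under `Ê`. -/
def IdentDistrib {Ω : Type*} (sl : SubLinearExpectation Ω) (X : ℕ → Ω → ℝ) : Prop :=
  ∀ n : ℕ, ∀ φ : ℝ → ℝ, IsCLlip1 φ →
    sl.E (fun ω => φ (X n ω)) = sl.E (fun ω => φ (X 0 ω))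

open MeasureTheory

section helpers
variable {Ω : Type*} (sl : SubLinearExpectation Ω)

lemma E_nonneg {Z : Ω → ℝ} (h : ∀ ω, 0 ≤ Z ω) : 0 ≤ sl.E Z := by
  have := sl.mono (X := fun _ => (0:ℝ)) (Y := Z) h
  rwa [sl.constPres] at this

lemma uc_set_nonempty (A : Set Ω) :
    {r : ℝ | ∃ ξ : Ω → ℝ, (∀ ω, A.indicator (fun _ => (1 : ℝ)) ω ≤ ξ ω) ∧ sl.E ξ = r}.Nonempty := by
  refine ⟨sl.E (fun _ => (1:ℝ)), fun _ => (1:ℝ), fun ω => ?_, rfl⟩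
  by_cases h : ω ∈ A <;> simp [Set.indicator_apply, h]

lemma uc_set_bddBelow (A : Set Ω) :
    BddBelow {r : ℝ | ∃ ξ : Ω → ℝ, (∀ ω, A.indicator (fun _ => (1 : ℝ)) ω ≤ ξ ω) ∧ sl.E ξ = r} := by
  refine ⟨0, fun r hr => ?_⟩
  obtain ⟨ξ, hξ, rfl⟩ := hr
  refine E_nonneg sl fun ω => le_trans ?_ (hξ ω)
  by_cases h : ω ∈ A <;> simp [Set.indicator_apply, h]

lemma V_nonneg (A : Set Ω) : 0 ≤ upperCapacity sl A := by
  refine le_csInf (uc_set_nonempty sl A) fun r hr => ?_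
  obtain ⟨ξ, hξ, rfl⟩ := hr
  refine E_nonneg sl fun ω => le_trans ?_ (hξ ω)
  by_cases h : ω ∈ A <;> simp [Set.indicator_apply, h]

lemma V_le {A : Set Ω} {ξ : Ω → ℝ} (h1 : ∀ ω, ω ∈ A → 1 ≤ ξ ω) (h0 : ∀ ω, 0 ≤ ξ ω) :
    upperCapacity sl A ≤ sl.E ξ := by
  refine csInf_le (uc_set_bddBelow sl A) ⟨ξ, fun ω => ?_, rfl⟩
  by_cases h : ω ∈ A <;> simp [Set.indicator_apply, h, h1 ω, h0 ω]

lemma V_le_one (A : Set Ω) : upperCapacity sl A ≤ 1 := by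
  have := V_le sl (A := A) (ξ := fun _ => (1:ℝ)) (fun _ _ => le_rfl) (fun _ => zero_le_one)
  rwa [sl.constPres] at this

lemma V_mono {A B : Set Ω} (h : A ⊆ B) : upperCapacity sl A ≤ upperCapacity sl B := by
  refine le_csInf (uc_set_nonempty sl B) fun r hr => ?_
  obtain ⟨ξ, hξ, rfl⟩ := hr
  refine csInf_le (uc_set_bddBelow sl A) ⟨ξ, fun ω => le_trans ?_ (hξ ω), rfl⟩
  by_cases hA : ω ∈ A
  · simp [Set.indicator_apply, hA, h hA]
  · simp [Set.indicator_apply, hA]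
    by_cases hB : ω ∈ B <;> simp [hB]

lemma E_ite_le_V (P : Ω → Prop) [∀ ω, Decidable (P ω)] :
    sl.E (fun ω => if P ω then (1:ℝ) else 0) ≤ upperCapacity sl {ω | P ω} := by
  set A : Set Ω := {ω | P ω} with hA
  refine le_csInf (uc_set_nonempty sl A) fun r hr => ?_
  obtain ⟨ξ, hξ, rfl⟩ := hr
  refine sl.mono fun ω => le_trans ?_ (hξ ω)
  by_cases h : P ω
  · have : ω ∈ A := h
    simp [Set.indicator_apply, h, this]
  · have : ω ∉ A := h
    simp [Set.indicator_apply, h, this]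

lemma V_empty : upperCapacity sl (∅ : Set Ω) = 0 := by
  refine le_antisymm ?_ (V_nonneg sl _)
  have := V_le sl (A := (∅ : Set Ω)) (ξ := fun _ => (0:ℝ)) (fun _ h => h.elim) (fun _ => le_rfl)
  rwa [sl.constPres] at this

lemma E_finsum_le (s : Finset ℕ) (f : ℕ → Ω → ℝ) :
    sl.E (fun ω => ∑ i ∈ s, f i ω) ≤ ∑ i ∈ s, sl.E (f i) := by
  classical
  induction s using Finset.cons_induction with
  | empty => simp [sl.constPres]
  | cons i s hi ih =>
      rw [Finset.sum_cons]
      calc sl.E (fun ω => ∑ j ∈ Finset.cons i s hi, f j ω)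
          = sl.E (fun ω => f i ω + ∑ j ∈ s, f j ω) := by
            congr 1; funext ω; rw [Finset.sum_cons]
        _ ≤ sl.E (f i) + sl.E (fun ω => ∑ j ∈ s, f j ω) := sl.subadd _ _
        _ ≤ _ := by exact add_le_add le_rfl ih

lemma markov {Z : Ω → ℝ} (h0 : ∀ ω, 0 ≤ Z ω) {c : ℝ} (hc : 0 < c) :
    upperCapacity sl {ω | c ≤ Z ω} ≤ sl.E Z / c := by
  have h := V_le sl (A := {ω | c ≤ Z ω}) (ξ := fun ω => Z ω / c)
    (fun ω hω => (one_le_div hc).2 hω) (fun ω => div_nonneg (h0 ω) hc.le)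
  calc upperCapacity sl {ω | c ≤ Z ω} ≤ sl.E (fun ω => Z ω / c) := h
    _ = sl.E Z / c := by
        have h2 := sl.posHomog c⁻¹ (by positivity) Z
        have : (fun ω => Z ω / c) = fun ω => c⁻¹ * Z ω := by funext ω; ring
        rw [this, h2, div_eq_mul_inv, mul_comm]

lemma V_union_le (A B : Set Ω) (hV : CountablySubAdditive (upperCapacity sl)) :
    upperCapacity sl (A ∪ B) ≤ upperCapacity sl A + upperCapacity sl B := by
  classical
  have h := hV (fun n => if n = 0 then A else if n = 1 then B else ∅)
  have hU : (⋃ n, (if n = 0 then A else if n = 1 then B else (∅ : Set Ω))) = A ∪ B := by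
    ext ω; simp only [Set.mem_iUnion, Set.mem_union]
    constructor
    · rintro ⟨n, hn⟩
      rcases n with _ | _ | n <;> simp_all
    · rintro (h | h)
      exacts [⟨0, by simp [h]⟩, ⟨1, by simp [h]⟩]
  rw [hU] at h
  refine h.trans ?_
  have : (fun n => upperCapacity sl (if n = 0 then A else if n = 1 then B else ∅))
      = fun n => if n = 0 then upperCapacity sl A else if n = 1 then upperCapacity sl B else 0 := by
    funext n; rcases n with _ | _ | n <;> simp [V_empty]
  rw [this]
  rw [tsum_eq_sum (s := {0, 1}) (by intro n hn; rcases n with _ | _ | n <;> simp_all)]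
  simp

lemma borel_cantelli (hV : CountablySubAdditive (upperCapacity sl)) (A : ℕ → Set Ω) (b : ℕ → ℝ)
    (hb : Summable b) (hab : ∀ n, upperCapacity sl (A n) ≤ b n) :
    upperCapacity sl (⋂ N, ⋃ n, A (n + N)) = 0 := by
  refine le_antisymm ?_ (V_nonneg sl _)
  have key : ∀ N : ℕ, upperCapacity sl (⋂ N, ⋃ n, A (n + N)) ≤ ∑' n, b (n + N) := by
    intro N
    have h1 : upperCapacity sl (⋂ M, ⋃ n, A (n + M)) ≤ upperCapacity sl (⋃ n, A (n + N)) :=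
      V_mono sl (Set.iInter_subset _ N)
    have h2 := hV (fun n => A (n + N))
    have hbt : Summable (fun n => b (n + N)) := (summable_nat_add_iff N).2 hb
    have hsum : Summable (fun n => upperCapacity sl (A (n + N))) :=
      Summable.of_nonneg_of_le (fun n => V_nonneg sl _) (fun n => hab _) hbt
    exact h1.trans (h2.trans (hsum.tsum_le_tsum (fun n => hab _) hbt))
  exact ge_of_tendsto' (tendsto_sum_nat_add b) key |>.trans_eq rfl |> fun h => by
    exact le_trans (le_of_eq rfl) (by exact ge_of_tendsto' (tendsto_sum_nat_add b) key)

lemma isCLlip1_of_lip {φ : ℝ → ℝ} {L : ℝ} (hL : 0 ≤ L)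
    (h : ∀ x y, |φ x - φ y| ≤ L * |x - y|) : IsCLlip1 φ := by
  refine ⟨L + 1, by positivity, 0, fun x y => le_trans (h x y) ?_⟩
  simp only [pow_zero]
  nlinarith [abs_nonneg (x - y)]

noncomputable def rr (a : ℝ) (n : ℕ) : ℝ := (n : ℝ) ^ a

lemma rr_nonneg (a : ℝ) (n : ℕ) : 0 ≤ rr a n := Real.rpow_nonneg (Nat.cast_nonneg n) a

lemma rr_zero {a : ℝ} (ha : 0 < a) : rr a 0 = 0 := by
  simp [rr, Real.zero_rpow (ne_of_gt ha)]

lemma rr_mono {a : ℝ} (ha : 0 < a) {m n : ℕ} (h : m ≤ n) : rr a m ≤ rr a n :=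
  Real.rpow_le_rpow (Nat.cast_nonneg m) (Nat.cast_le.2 h) ha.le

lemma rr_pos {a : ℝ} (ha : 0 < a) {n : ℕ} (hn : 0 < n) : 0 < rr a n :=
  Real.rpow_pos_of_pos (by exact_mod_cast hn) a

lemma d_nonneg {a : ℝ} (ha : 0 < a) (j : ℕ) : 0 ≤ rr a (j + 1) - rr a j :=
  sub_nonneg.2 (rr_mono ha (Nat.le_succ j))

lemma d_le {a : ℝ} (ha : 1 < a) (j : ℕ) :
    rr a (j + 1) - rr a j ≤ a * ((j : ℝ) + 1) ^ (a - 1) := by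
  set x : ℝ := (j : ℝ) with hx
  have hx0 : 0 ≤ x := Nat.cast_nonneg j
  have hx1 : (0:ℝ) < x + 1 := by linarith
  have hbern : 1 + a * (-(1 / (x + 1))) ≤ (1 + -(1 / (x + 1))) ^ a :=
    one_add_mul_self_le_rpow_one_add (by
      rw [neg_le, neg_neg]
      rw [div_le_one hx1]; linarith) ha.le
  have h1 : (1 : ℝ) + -(1 / (x + 1)) = x / (x + 1) := by field_simp; ring
  rw [h1] at hbern
  have h2 : (x / (x + 1)) ^ a = x ^ a / (x + 1) ^ a := Real.div_rpow hx0 hx1.le a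
  rw [h2] at hbern
  have h3 : (0:ℝ) < (x + 1) ^ a := Real.rpow_pos_of_pos hx1 a
  have h4 : (x + 1) ^ (a - 1) = (x + 1) ^ a / (x + 1) := Real.rpow_sub_one (ne_of_gt hx1) a
  have key : (x + 1) ^ a - a * ((x + 1) ^ a / (x + 1)) ≤ x ^ a := by
    have := mul_le_mul_of_nonneg_right hbern h3.le
    calc (x + 1) ^ a - a * ((x + 1) ^ a / (x + 1))
        = (1 + a * (-(1 / (x + 1)))) * (x + 1) ^ a := by field_simp; ring
      _ ≤ x ^ a / (x + 1) ^ a * (x + 1) ^ a := this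
      _ = x ^ a := by field_simp
  have hcast : rr a (j + 1) = (x + 1) ^ a := by
    rw [rr]; norm_num [hx]
  have hcast2 : rr a j = x ^ a := rfl
  rw [hcast, hcast2, h4]
  linarith

lemma trunc_le {a : ℝ} (ha : 0 < a) (s : ℝ) (hs : 0 ≤ s) (i : ℕ) :
    min s (rr a i) ≤
      ∑ j ∈ Finset.range i, (rr a (j + 1) - rr a j) * (if rr a j ≤ s then 1 else 0) := by
  induction i with
  | zero => simp [rr_zero ha, hs]
  | succ i ih =>
      rw [Finset.sum_range_succ]
      by_cases h : rr a i ≤ s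
      · have : min s (rr a i) = rr a i := min_eq_right h
        rw [this] at ih
        simp only [h, if_true, mul_one]
        have : min s (rr a (i + 1)) ≤ rr a (i + 1) := min_le_right _ _
        linarith
      · push_neg at h
        simp only [not_le.2 h, if_false, mul_zero, add_zero]
        have h1 : min s (rr a i) = s := min_eq_left h.le
        have h2 : min s (rr a (i + 1)) = s :=
          min_eq_left (h.le.trans (rr_mono ha (Nat.le_succ i)))
        rw [h1] at ih; rw [h2]; exact ih

lemma geom_partial_le {q : ℝ} (h0 : 0 ≤ q) (h1 : q < 1) (K : ℕ) :
    ∑ t ∈ Finset.range K, q ^ t ≤ (1 - q)⁻¹ := by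
  rw [geom_sum_eq (ne_of_lt h1)]
  rw [div_le_iff_of_neg (by linarith : q - 1 < 0)]
  have h2 : (0:ℝ) < 1 - q := by linarith
  have h3 : (1 - q)⁻¹ * (q - 1) = -1 := by field_simp; ring
  rw [h3]
  nlinarith [pow_nonneg h0 K]

lemma pow_rpow_eq {a : ℝ} (t : ℕ) : ((2:ℝ) ^ t) ^ (1 - a) = ((2:ℝ) ^ (1 - a)) ^ t := by
  rw [← Real.rpow_natCast ((2:ℝ) ^ (1-a)) t, ← Real.rpow_natCast (2:ℝ) t,
    ← Real.rpow_mul (by norm_num), ← Real.rpow_mul (by norm_num), mul_comm]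

lemma inner_geom {a : ℝ} (ha : 1 < a) (K j : ℕ) :
    ∑ k ∈ Finset.range K, (if j < 2 ^ (k + 1) then ((2:ℝ) ^ k) ^ (1 - a) else 0)
      ≤ (4:ℝ) ^ (a - 1) * (1 - (2:ℝ) ^ (1 - a))⁻¹ * ((j:ℝ) + 1) ^ (1 - a) := by
  classical
  set q : ℝ := (2:ℝ) ^ (1 - a) with hq
  have hq0 : 0 < q := Real.rpow_pos_of_pos (by norm_num) _
  have hq1 : q < 1 := Real.rpow_lt_one_of_one_lt_of_neg (by norm_num) (by linarith)
  set κ : ℕ := Nat.log 2 (j + 1) - 1 with hκ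
  have hk0 : j + 1 < 2 ^ (Nat.log 2 (j + 1) + 1) := Nat.lt_pow_succ_log_self (by norm_num) _
  -- lower bound: 4 * 2^κ ≥ j + 1
  have h4 : j + 1 ≤ 4 * 2 ^ κ := by
    have : 2 ^ (Nat.log 2 (j+1) + 1) ≤ 2 ^ (κ + 2) := Nat.pow_le_pow_right (by norm_num) (by omega)
    have h2 : (2:ℕ) ^ (κ + 2) = 4 * 2 ^ κ := by ring
    omega
  -- admissible k are ≥ κ
  have hadm : ∀ k, j < 2 ^ (k + 1) → κ ≤ k := by
    intro k hk
    have h1 : j + 1 ≤ 2 ^ (k + 1) := hk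
    have := Nat.log_mono_right (b := 2) h1
    rw [Nat.log_pow (by norm_num)] at this
    omega
  have hstep1 : ∑ k ∈ Finset.range K, (if j < 2 ^ (k + 1) then ((2:ℝ) ^ k) ^ (1 - a) else 0)
      ≤ ∑ k ∈ Finset.Ico κ K, ((2:ℝ) ^ k) ^ (1 - a) := by
    rw [← Finset.sum_filter]
    refine Finset.sum_le_sum_of_subset_of_nonneg ?_ ?_
    · intro k hk
      simp only [Finset.mem_filter, Finset.mem_range] at hk
      exact Finset.mem_Ico.2 ⟨hadm k hk.2, hk.1⟩
    · intro k _ _; positivity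
  have hstep2 : ∑ k ∈ Finset.Ico κ K, ((2:ℝ) ^ k) ^ (1 - a)
      ≤ ((2:ℝ) ^ κ) ^ (1 - a) * (1 - q)⁻¹ := by
    rw [Finset.sum_Ico_eq_sum_range]
    have : ∀ t, ((2:ℝ) ^ (κ + t)) ^ (1 - a) = ((2:ℝ) ^ κ) ^ (1 - a) * q ^ t := by
      intro t
      rw [pow_add, Real.mul_rpow (by positivity) (by positivity), pow_rpow_eq (a := a) t, hq]
    calc ∑ t ∈ Finset.range (K - κ), ((2:ℝ) ^ (κ + t)) ^ (1 - a)
        = ((2:ℝ) ^ κ) ^ (1 - a) * ∑ t ∈ Finset.range (K - κ), q ^ t := by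
          rw [Finset.mul_sum]; exact Finset.sum_congr rfl fun t _ => this t
      _ ≤ _ := by
          refine mul_le_mul_of_nonneg_left (geom_partial_le hq0.le hq1 _) (by positivity)
  have hstep3 : ((2:ℝ) ^ κ) ^ (1 - a) ≤ (4:ℝ) ^ (a - 1) * ((j:ℝ) + 1) ^ (1 - a) := by
    have hb : ((j:ℝ) + 1) / 4 ≤ (2:ℝ) ^ κ := by
      rw [div_le_iff₀ (by norm_num)]
      have := (Nat.cast_le (α := ℝ)).2 h4
      push_cast at this
      linarith
    have hpos : (0:ℝ) < ((j:ℝ) + 1) / 4 := by positivity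
    have := Real.rpow_le_rpow_of_nonpos hpos hb (by linarith : 1 - a ≤ 0)
    calc ((2:ℝ) ^ κ) ^ (1 - a) ≤ (((j:ℝ) + 1) / 4) ^ (1 - a) := this
      _ = ((j:ℝ) + 1) ^ (1 - a) / (4:ℝ) ^ (1 - a) := Real.div_rpow (by positivity) (by norm_num) _
      _ = (4:ℝ) ^ (a - 1) * ((j:ℝ) + 1) ^ (1 - a) := by
          rw [div_eq_mul_inv, ← Real.rpow_neg (by norm_num : (0:ℝ) ≤ 4), mul_comm]
          ring_nf
  have hpos1 : (0:ℝ) < (1 - q)⁻¹ := by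
    rw [inv_pos]; linarith
  calc ∑ k ∈ Finset.range K, (if j < 2 ^ (k + 1) then ((2:ℝ) ^ k) ^ (1 - a) else 0)
      ≤ ((2:ℝ) ^ κ) ^ (1 - a) * (1 - q)⁻¹ := hstep1.trans hstep2
    _ ≤ (4:ℝ) ^ (a - 1) * ((j:ℝ) + 1) ^ (1 - a) * (1 - q)⁻¹ :=
        mul_le_mul_of_nonneg_right hstep3 hpos1.le
    _ = (4:ℝ) ^ (a - 1) * (1 - q)⁻¹ * ((j:ℝ) + 1) ^ (1 - a) := by ring

lemma min_lip (u v c : ℝ) : |min u c - min v c| ≤ |u - v| := by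
  rcases le_total u c with h1 | h1 <;> rcases le_total v c with h2 | h2 <;>
    simp [min_eq_left, min_eq_right, h1, h2] <;> rw [abs_le] <;>
    constructor <;> cases' abs_cases (u - v) with h h <;> linarith [h.1, h.2]

lemma max_lip (u v c : ℝ) : |max u c - max v c| ≤ |u - v| := by
  rcases le_total u c with h1 | h1 <;> rcases le_total v c with h2 | h2 <;>
    simp [max_eq_left, max_eq_right, h1, h2] <;> rw [abs_le] <;>
    constructor <;> cases' abs_cases (u - v) with h h <;> linarith [h.1, h.2]

lemma sum_range_extend {M N : ℕ} (h : M ≤ N) (g : ℕ → ℝ) :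
    ∑ j ∈ Finset.range M, g j = ∑ j ∈ Finset.range N, if j < M then g j else 0 := by
  classical
  rw [← Finset.sum_filter]
  congr 1
  ext j
  simp only [Finset.mem_filter, Finset.mem_range]
  omega

lemma rr_lt {a : ℝ} (ha : 0 < a) {m n : ℕ} (h : m < n) : rr a m < rr a n :=
  Real.rpow_lt_rpow (Nat.cast_nonneg m) (by exact_mod_cast h) ha

open MeasureTheory in
lemma summable_antitone_of_lintegral (f : ℝ → ℝ) (hmono : ∀ ⦃s t : ℝ⦄, s ≤ t → f t ≤ f s)
    (h0 : ∀ t, 0 ≤ f t)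
    (hint : (∫⁻ t in Set.Ioi (0:ℝ), ENNReal.ofReal (f t)) < ⊤) :
    Summable (fun k : ℕ => f k) := by
  classical
  set I : ENNReal := ∫⁻ t in Set.Ioi (0:ℝ), ENNReal.ofReal (f t) with hI
  have hant : Antitone f := fun s t hst => hmono hst
  have hmeas : Measurable fun t => ENNReal.ofReal (f t) :=
    ENNReal.measurable_ofReal.comp hant.measurable
  have key : ∀ K : ℕ, ∑ k ∈ Finset.range K, ENNReal.ofReal (f (k + 1)) ≤ I := by
    intro K
    have h1 : ∀ k : ℕ, ENNReal.ofReal (f (k + 1))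
        ≤ ∫⁻ t in Set.Ioc (k : ℝ) (k + 1), ENNReal.ofReal (f t) := by
      intro k
      have hconst : ∫⁻ _ in Set.Ioc (k : ℝ) (k + 1), ENNReal.ofReal (f (k+1))
          = ENNReal.ofReal (f (k + 1)) := by
        rw [setLIntegral_const, Real.volume_Ioc]
        norm_num
      rw [← hconst]
      refine setLIntegral_mono hmeas fun t ht => ?_
      exact ENNReal.ofReal_le_ofReal (hmono ht.2)
    set A : ℕ → Set ℝ := fun k => if k < K then Set.Ioc (k : ℝ) (k + 1) else ∅ with hA
    have hdisj : Pairwise (Function.onFun Disjoint A) := by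
      intro i j hij
      simp only [hA, Function.onFun]
      by_cases hi : i < K <;> by_cases hj : j < K <;>
        simp [hi, hj, Set.disjoint_empty, Set.empty_disjoint]
      rcases hij.lt_or_gt with h | h
      · right; left; exact_mod_cast Nat.succ_le_of_lt h
      · left; right; exact_mod_cast Nat.succ_le_of_lt h
    have hmA : ∀ k, MeasurableSet (A k) := by
      intro k; by_cases h : k < K <;> simp [hA, h]
    have hsub : (⋃ k, A k) ⊆ Set.Ioi (0:ℝ) := by
      intro t ht
      obtain ⟨k, hk⟩ := Set.mem_iUnion.1 ht
      by_cases h : k < K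
      · simp only [hA, h, if_true] at hk
        exact lt_of_le_of_lt (Nat.cast_nonneg k) hk.1
      · simp [hA, h] at hk
    calc ∑ k ∈ Finset.range K, ENNReal.ofReal (f (k + 1))
        ≤ ∑ k ∈ Finset.range K, ∫⁻ t in Set.Ioc (k : ℝ) (k + 1), ENNReal.ofReal (f t) :=
          Finset.sum_le_sum fun k _ => h1 k
      _ = ∑' k : ℕ, ∫⁻ t in A k, ENNReal.ofReal (f t) := by
          rw [tsum_eq_sum (s := Finset.range K) (by
            intro k hk
            simp only [Finset.mem_range, not_lt] at hk
            simp [hA, Nat.not_lt.2 hk])]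
          refine Finset.sum_congr rfl fun k hk => ?_
          simp only [Finset.mem_range] at hk
          simp [hA, hk]
      _ = ∫⁻ t in ⋃ k, A k, ENNReal.ofReal (f t) := (lintegral_iUnion hmA hdisj _).symm
      _ ≤ I := by
          rw [hI]
          exact lintegral_mono_set hsub
  refine summable_of_sum_range_le (c := f 0 + I.toReal) (fun n => h0 _) ?_
  intro K
  have h2 : ∑ k ∈ Finset.range K, f k ≤ f 0 + ∑ k ∈ Finset.range K, f (k + 1) := by
    cases K with
    | zero => simp [h0 0]
    | succ K =>
        rw [Finset.sum_range_succ' (fun k => f k) K]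
        have : ∑ k ∈ Finset.range K, f (k+1) ≤ ∑ k ∈ Finset.range (K+1), f (k+1) := by
          refine Finset.sum_le_sum_of_subset_of_nonneg ?_ (fun i _ _ => h0 _) 
          exact Finset.range_subset_range.2 (Nat.le_succ K)
        push_cast
        linarith
  refine h2.trans (add_le_add le_rfl ?_)
  have h3 : ENNReal.ofReal (∑ k ∈ Finset.range K, f (k+1)) ≤ I := by
    rw [ENNReal.ofReal_sum_of_nonneg (fun i _ => h0 _)]
    exact key K
  exact (ENNReal.ofReal_le_iff_le_toReal (ne_of_lt hint)).1 h3

section aux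
variable {Ω : Type*} (sl : SubLinearExpectation Ω)

lemma VA_bound (X : ℕ → Ω → ℝ) (hident : IdentDistrib sl X) {a : ℝ} (ha : 1 < a)
    (n : ℕ) (hn : 1 ≤ n) :
    upperCapacity sl {ω | rr a n < |X n ω|}
      ≤ upperCapacity sl {ω | rr a (n - 1) ≤ |X 0 ω|} := by
  have ha0 : 0 < a := lt_trans one_pos ha
  set c : ℝ := rr a (n - 1) with hc
  set D : ℝ := rr a n - c with hD
  have hD0 : 0 < D := sub_pos.2 (rr_lt ha0 (by omega))
  set g : ℝ → ℝ := fun x => min (max ((|x| - c) / D) 0) 1 with hg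
  have hg0 : ∀ x, 0 ≤ g x := fun x => le_min (le_max_right _ _) zero_le_one
  have hglip : ∀ x y, |g x - g y| ≤ D⁻¹ * |x - y| := by
    intro x y
    refine le_trans (min_lip _ _ 1) (le_trans (max_lip _ _ 0) ?_)
    have : (|x| - c) / D - (|y| - c) / D = (|x| - |y|) / D := by ring
    rw [this, abs_div, abs_of_pos hD0, div_eq_inv_mul]
    exact mul_le_mul_of_nonneg_left (abs_abs_sub_abs_le_abs_sub x y) (inv_nonneg.2 hD0.le)
  have hVle : upperCapacity sl {ω | rr a n < |X n ω|} ≤ sl.E (fun ω => g (X n ω)) := by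
    refine V_le sl (fun ω hω => ?_) (fun ω => hg0 _)
    have h1 : (1:ℝ) ≤ (|X n ω| - c) / D := by
      rw [le_div_iff₀ hD0]
      have : rr a n < |X n ω| := hω
      simp only [hD, one_mul]
      linarith
    simp only [hg]
    rw [max_eq_left (le_trans zero_le_one h1), min_eq_right h1]
  rw [hident n g (isCLlip1_of_lip (inv_nonneg.2 hD0.le) hglip)] at hVle
  refine hVle.trans ?_
  refine le_trans (sl.mono (Y := fun ω => if c ≤ |X 0 ω| then (1:ℝ) else 0) fun ω => ?_)
    (E_ite_le_V sl _)
  by_cases h : c ≤ |X 0 ω|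
  · simp only [h, if_true]
    exact min_le_right _ _
  · push_neg at h
    simp only [h.not_ge, if_false]
    have : (|X 0 ω| - c) / D ≤ 0 := div_nonpos_of_nonpos_of_nonneg (by linarith) hD0.le
    simp only [hg]
    rw [max_eq_right this]
    simp

lemma Eh_bound (X : ℕ → Ω → ℝ) (hident : IdentDistrib sl X) {a : ℝ} (ha : 1 < a) (i : ℕ) :
    sl.E (fun ω => min |X i ω| (rr a i))
      ≤ ∑ j ∈ Finset.range i,
          (rr a (j + 1) - rr a j) * upperCapacity sl {ω | rr a j ≤ |X 0 ω|} := by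
  have ha0 : 0 < a := lt_trans one_pos ha
  have hlip : IsCLlip1 (fun x => min |x| (rr a i)) := by
    refine isCLlip1_of_lip zero_le_one fun x y => ?_
    rw [one_mul]
    exact le_trans (min_lip _ _ _) (abs_abs_sub_abs_le_abs_sub x y)
  rw [hident i _ hlip]
  calc sl.E (fun ω => min |X 0 ω| (rr a i))
      ≤ sl.E (fun ω => ∑ j ∈ Finset.range i,
          (rr a (j + 1) - rr a j) * (if rr a j ≤ |X 0 ω| then 1 else 0)) :=
        sl.mono fun ω => trunc_le ha0 _ (abs_nonneg _) i
    _ ≤ ∑ j ∈ Finset.range i,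
          sl.E (fun ω => (rr a (j + 1) - rr a j) * (if rr a j ≤ |X 0 ω| then 1 else 0)) :=
        E_finsum_le sl _ _
    _ ≤ _ := by
        refine Finset.sum_le_sum fun j _ => ?_
        rw [sl.posHomog _ (d_nonneg ha0 j)]
        exact mul_le_mul_of_nonneg_left (E_ite_le_V sl _) (d_nonneg ha0 j)

lemma key_partial_bound {a : ℝ} (ha : 1 < a) (v : ℕ → ℝ) (hv0 : ∀ j, 0 ≤ v j) (Mv : ℝ)
    (hMv : ∀ N, ∑ j ∈ Finset.range N, v j ≤ Mv) (K : ℕ) :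
    ∑ k ∈ Finset.range K, ((2:ℝ) ^ k) ^ (1 - a)
        * (∑ j ∈ Finset.range (2 ^ (k + 1)), (rr a (j + 1) - rr a j) * v j)
      ≤ (4:ℝ) ^ (a - 1) * (1 - (2:ℝ) ^ (1 - a))⁻¹ * a * Mv := by
  classical
  have ha0 : 0 < a := lt_trans one_pos ha
  set G : ℝ := (4:ℝ) ^ (a - 1) * (1 - (2:ℝ) ^ (1 - a))⁻¹ with hG
  have hG0 : 0 ≤ G := by
    have hq1 : (2:ℝ) ^ (1 - a) < 1 :=
      Real.rpow_lt_one_of_one_lt_of_neg (by norm_num) (by linarith)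
    have : (0:ℝ) ≤ (4:ℝ) ^ (a - 1) := (Real.rpow_pos_of_pos (by norm_num) _).le
    have h2 : (0:ℝ) ≤ (1 - (2:ℝ) ^ (1 - a))⁻¹ := by
      rw [inv_nonneg]; linarith
    positivity
  set w : ℕ → ℝ := fun j => (rr a (j + 1) - rr a j) * v j with hw
  have hw0 : ∀ j, 0 ≤ w j := fun j => mul_nonneg (d_nonneg ha0 j) (hv0 j)
  have step1 : ∑ k ∈ Finset.range K, ((2:ℝ) ^ k) ^ (1 - a)
        * (∑ j ∈ Finset.range (2 ^ (k + 1)), w j)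
      = ∑ j ∈ Finset.range (2 ^ K),
          (∑ k ∈ Finset.range K, if j < 2 ^ (k + 1) then ((2:ℝ) ^ k) ^ (1 - a) else 0)
            * w j := by
    have h1 : ∀ k ∈ Finset.range K, ((2:ℝ) ^ k) ^ (1 - a)
          * (∑ j ∈ Finset.range (2 ^ (k + 1)), w j)
        = ∑ j ∈ Finset.range (2 ^ K),
            (if j < 2 ^ (k + 1) then ((2:ℝ) ^ k) ^ (1 - a) else 0) * w j := by
      intro k hk
      have hkK : (2:ℕ) ^ (k + 1) ≤ 2 ^ K :=
        Nat.pow_le_pow_right (by norm_num) (Finset.mem_range.1 hk)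
      rw [Finset.mul_sum, sum_range_extend hkK (fun j => ((2:ℝ) ^ k) ^ (1 - a) * w j)]
      refine Finset.sum_congr rfl fun j _ => ?_
      split <;> simp
    rw [Finset.sum_congr rfl h1, Finset.sum_comm]
    refine Finset.sum_congr rfl fun j _ => ?_
    rw [Finset.sum_mul]
  rw [step1]
  have step2 : ∀ j ∈ Finset.range (2 ^ K),
      (∑ k ∈ Finset.range K, if j < 2 ^ (k + 1) then ((2:ℝ) ^ k) ^ (1 - a) else 0) * w j
        ≤ G * a * v j := by
    intro j _
    have hinner : (∑ k ∈ Finset.range K, if j < 2 ^ (k + 1) then ((2:ℝ) ^ k) ^ (1 - a) else 0)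
        ≤ G * ((j:ℝ) + 1) ^ (1 - a) := by
      rw [hG]
      exact inner_geom ha K j
    have hinner0 : (0:ℝ) ≤ ∑ k ∈ Finset.range K,
        if j < 2 ^ (k + 1) then ((2:ℝ) ^ k) ^ (1 - a) else 0 := by
      refine Finset.sum_nonneg fun k _ => ?_
      split
      · positivity
      · exact le_rfl
    have hj1 : (0:ℝ) < (j:ℝ) + 1 := by positivity
    have hwj : w j ≤ a * ((j:ℝ) + 1) ^ (a - 1) * v j :=
      mul_le_mul_of_nonneg_right (d_le ha j) (hv0 j)
    calc (∑ k ∈ Finset.range K, if j < 2 ^ (k + 1) then ((2:ℝ) ^ k) ^ (1 - a) else 0) * w j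
        ≤ (G * ((j:ℝ) + 1) ^ (1 - a)) * (a * ((j:ℝ) + 1) ^ (a - 1) * v j) := by
          refine mul_le_mul hinner hwj (hw0 j) ?_
          have : (0:ℝ) ≤ ((j:ℝ) + 1) ^ (1 - a) := (Real.rpow_pos_of_pos hj1 _).le
          positivity
      _ = G * a * (((j:ℝ) + 1) ^ (1 - a) * ((j:ℝ) + 1) ^ (a - 1)) * v j := by ring
      _ = G * a * v j := by
          rw [← Real.rpow_add hj1]
          norm_num
  calc ∑ j ∈ Finset.range (2 ^ K),
        (∑ k ∈ Finset.range K, if j < 2 ^ (k + 1) then ((2:ℝ) ^ k) ^ (1 - a) else 0) * w j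
      ≤ ∑ j ∈ Finset.range (2 ^ K), G * a * v j := Finset.sum_le_sum step2
    _ = G * a * ∑ j ∈ Finset.range (2 ^ K), v j := by rw [Finset.mul_sum]
    _ ≤ G * a * Mv := by
        refine mul_le_mul_of_nonneg_left (hMv _) ?_
        positivity
    _ = (4:ℝ) ^ (a - 1) * (1 - (2:ℝ) ^ (1 - a))⁻¹ * a * Mv := by rw [hG]
end aux

end helpers

theorem marcinkiewicz_slln_small_p {Ω : Type*} (sl : SubLinearExpectation Ω)
    (X : ℕ → Ω → ℝ) (hindep : IndepSeq sl X) (hident : IdentDistrib sl X)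
    (hV : CountablySubAdditive (upperCapacity sl))
    (p : ℝ) (hp0 : 0 < p) (hp1 : p < 1)
    (hChoquet : (∫⁻ t in Set.Ioi (0 : ℝ),
      ENNReal.ofReal (upperCapacity sl {ω | |X 0 ω| ^ p ≥ t})) < ⊤) :
    upperCapacity sl
      {ω | ¬ Filter.Tendsto (fun n : ℕ => (∑ i ∈ Finset.range n, X i ω) / (n : ℝ) ^ (1 / p))
        Filter.atTop (nhds 0)} = 0 := by
  classical
  set a : ℝ := 1 / p with ha_def
  have ha : 1 < a := (one_lt_div hp0).2 hp1
  have ha0 : 0 < a := lt_trans one_pos ha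
  -- the capacity tail sequence
  set v : ℕ → ℝ := fun k => upperCapacity sl {ω | rr a k ≤ |X 0 ω|} with hv_def
  have hv0 : ∀ k, 0 ≤ v k := fun k => V_nonneg sl _
  have hvsum : Summable v := by
    have hset : ∀ k : ℕ, {ω | rr a k ≤ |X 0 ω|} = {ω | |X 0 ω| ^ p ≥ ((k : ℕ) : ℝ)} := by
      intro k
      ext ω
      simp only [Set.mem_setOf_eq, ge_iff_le, rr]
      constructor
      · intro h
        have h2 : (((k:ℝ)) ^ a) ^ p ≤ |X 0 ω| ^ p :=
          Real.rpow_le_rpow (Real.rpow_nonneg (Nat.cast_nonneg k) a) h hp0.le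
        have hap : a * p = 1 := by rw [ha_def]; field_simp
        rwa [← Real.rpow_mul (Nat.cast_nonneg k), hap, Real.rpow_one] at h2
      · intro h
        have h2 : ((k:ℝ)) ^ a ≤ (|X 0 ω| ^ p) ^ a :=
          Real.rpow_le_rpow (Nat.cast_nonneg k) h ha0.le
        have hpa : p * a = 1 := by rw [ha_def]; field_simp
        rwa [← Real.rpow_mul (abs_nonneg _), hpa, Real.rpow_one] at h2
    have heq : v = fun k : ℕ => upperCapacity sl {ω | |X 0 ω| ^ p ≥ ((k : ℕ) : ℝ)} :=
      funext fun k => by rw [hv_def]; exact congrArg _ (hset k)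
    rw [heq]
    exact summable_antitone_of_lintegral (fun t => upperCapacity sl {ω | |X 0 ω| ^ p ≥ t})
      (fun s t hst => V_mono sl fun ω hω => le_trans hst hω) (fun t => V_nonneg sl _) hChoquet
  set Mv : ℝ := ∑' k, v k with hMv_def
  have hMvb : ∀ N, ∑ j ∈ Finset.range N, v j ≤ Mv :=
    fun N => hvsum.sum_le_tsum _ (fun i _ => hv0 i)
  -- truncated absolute sums
  set T : ℕ → Ω → ℝ := fun n ω => ∑ i ∈ Finset.range n, min |X i ω| (rr a i) with hT_def
  have hmin0 : ∀ (i : ℕ) (ω : Ω), 0 ≤ min |X i ω| (rr a i) :=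
    fun i ω => le_min (abs_nonneg _) (rr_nonneg a i)
  have hT0 : ∀ n ω, 0 ≤ T n ω := fun n ω => Finset.sum_nonneg fun i _ => hmin0 i ω
  have hTmono : ∀ (ω : Ω) {m n : ℕ}, m ≤ n → T m ω ≤ T n ω := fun ω m n h =>
    Finset.sum_le_sum_of_subset_of_nonneg (Finset.range_subset_range.2 h) fun i _ _ => hmin0 i ω
  -- the deterministic bounds
  set W : ℕ → ℝ := fun n => ∑ j ∈ Finset.range n, (rr a (j + 1) - rr a j) * v j with hW_def
  have hW0 : ∀ n, 0 ≤ W n :=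
    fun n => Finset.sum_nonneg fun j _ => mul_nonneg (d_nonneg ha0 j) (hv0 j)
  have hWmono : ∀ {m n : ℕ}, m ≤ n → W m ≤ W n := fun {m n} h =>
    Finset.sum_le_sum_of_subset_of_nonneg (Finset.range_subset_range.2 h)
      (fun j _ _ => mul_nonneg (d_nonneg ha0 j) (hv0 j))
  have hET : ∀ n : ℕ, sl.E (T n) ≤ (n : ℝ) * W n := by
    intro n
    calc sl.E (T n) ≤ ∑ i ∈ Finset.range n, sl.E (fun ω => min |X i ω| (rr a i)) :=
          E_finsum_le sl _ _
      _ ≤ ∑ i ∈ Finset.range n, W i :=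
          Finset.sum_le_sum fun i _ => Eh_bound sl X hident ha i
      _ ≤ ∑ i ∈ Finset.range n, W n :=
          Finset.sum_le_sum fun i hi => hWmono (Finset.mem_range.1 hi).le
      _ = (n : ℝ) * W n := by
          rw [Finset.sum_const, Finset.card_range, nsmul_eq_mul]
  -- first Borel--Cantelli: truncation events
  set A : ℕ → Set Ω := fun n => {ω | rr a n < |X n ω|} with hA_def
  set b : ℕ → ℝ := fun n => if n = 0 then 1 else v (n - 1) with hb_def
  have hbsum : Summable b := by
    refine (summable_nat_add_iff 1).1 ?_
    have : (fun n : ℕ => b (n + 1)) = v := by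
      funext n; simp [hb_def]
    rwa [this]
  have hVAb : ∀ n, upperCapacity sl (A n) ≤ b n := by
    intro n
    match n with
    | 0 => simpa [hb_def] using V_le_one sl (A 0)
    | (n + 1) =>
        have := VA_bound sl X hident ha (n + 1) (by omega)
        simpa [hb_def, hA_def, hv_def] using this
  have hN1 : upperCapacity sl (⋂ N, ⋃ n, A (n + N)) = 0 := borel_cantelli sl hV A b hbsum hVAb
  -- second Borel--Cantelli: block events
  set C : ℕ → ℕ → Set Ω := fun k m =>
    {ω | ((m : ℝ) + 1)⁻¹ * rr a (2 ^ k) ≤ T (2 ^ (k + 1)) ω} with hC_def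
  have hVC : ∀ m k, upperCapacity sl (C k m)
      ≤ ((m : ℝ) + 1) * 2 * (((2:ℝ) ^ k) ^ (1 - a) * W (2 ^ (k + 1))) := by
    intro m k
    have hx : (0:ℝ) < (2:ℝ) ^ k := by positivity
    have hm1 : (0:ℝ) < (m : ℝ) + 1 := by positivity
    have hRx : rr a (2 ^ k) = ((2:ℝ) ^ k) ^ a := by
      rw [rr]; norm_num
    have hR : (0:ℝ) < rr a (2 ^ k) := by rw [hRx]; positivity
    have hc0 : (0:ℝ) < ((m : ℝ) + 1)⁻¹ * rr a (2 ^ k) := by positivity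
    refine le_trans (markov sl (hT0 (2 ^ (k + 1))) hc0) ?_
    rw [div_le_iff₀ hc0]
    have h1 : sl.E (T (2 ^ (k + 1))) ≤ 2 * (2:ℝ) ^ k * W (2 ^ (k + 1)) := by
      have := hET (2 ^ (k + 1))
      have hcast : ((2 ^ (k + 1) : ℕ) : ℝ) = 2 * (2:ℝ) ^ k := by
        push_cast; ring
      rwa [hcast] at this
    refine h1.trans (le_of_eq ?_)
    have hxa : ((2:ℝ) ^ k) ^ (1 - a) * ((2:ℝ) ^ k) ^ a = (2:ℝ) ^ k := by
      rw [← Real.rpow_add hx]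
      norm_num
    rw [hRx]
    calc 2 * (2:ℝ) ^ k * W (2 ^ (k + 1))
        = 2 * (((2:ℝ) ^ k) ^ (1 - a) * ((2:ℝ) ^ k) ^ a) * W (2 ^ (k + 1)) := by rw [hxa]
      _ = ((m : ℝ) + 1) * 2 * (((2:ℝ) ^ k) ^ (1 - a) * W (2 ^ (k + 1)))
            * (((m : ℝ) + 1)⁻¹ * ((2:ℝ) ^ k) ^ a) := by
          field_simp
  have hVCsum : ∀ m : ℕ, Summable (fun k => upperCapacity sl (C k m)) := by
    intro m
    have hm1 : (0:ℝ) < (m : ℝ) + 1 := by positivity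
    refine summable_of_sum_range_le (fun k => V_nonneg sl _)
      (c := ((m : ℝ) + 1) * 2 * ((4:ℝ) ^ (a - 1) * (1 - (2:ℝ) ^ (1 - a))⁻¹ * a * Mv)) ?_
    intro K
    calc ∑ k ∈ Finset.range K, upperCapacity sl (C k m)
        ≤ ∑ k ∈ Finset.range K,
            ((m : ℝ) + 1) * 2 * (((2:ℝ) ^ k) ^ (1 - a) * W (2 ^ (k + 1))) :=
          Finset.sum_le_sum fun k _ => hVC m k
      _ = ((m : ℝ) + 1) * 2
            * ∑ k ∈ Finset.range K, ((2:ℝ) ^ k) ^ (1 - a) * W (2 ^ (k + 1)) := by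
          rw [Finset.mul_sum]
      _ ≤ ((m : ℝ) + 1) * 2
            * ((4:ℝ) ^ (a - 1) * (1 - (2:ℝ) ^ (1 - a))⁻¹ * a * Mv) := by
          refine mul_le_mul_of_nonneg_left ?_ (by positivity)
          exact key_partial_bound ha v hv0 Mv hMvb K
  have hN2 : ∀ m : ℕ, upperCapacity sl (⋂ K, ⋃ k, C (k + K) m) = 0 := fun m =>
    borel_cantelli sl hV (fun k => C k m) _ (hVCsum m) (fun k => le_rfl)
  set N1 : Set Ω := ⋂ N, ⋃ n, A (n + N) with hN1_def
  set N2 : Set Ω := ⋃ m : ℕ, ⋂ K, ⋃ k, C (k + K) m with hN2_def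
  have hN2' : upperCapacity sl N2 = 0 := by
    refine le_antisymm ?_ (V_nonneg sl _)
    refine le_trans (hV _) ?_
    have heq : (fun m : ℕ => upperCapacity sl (⋂ K, ⋃ k, C (k + K) m)) = fun _ => (0:ℝ) :=
      funext hN2
    rw [heq, tsum_zero]
  -- pathwise convergence outside N1 ∪ N2
  have hpath : ∀ ω, ω ∉ N1 → ω ∉ N2 →
      Filter.Tendsto (fun n : ℕ => (∑ i ∈ Finset.range n, X i ω) / rr a n)
        Filter.atTop (nhds 0) := by
    intro ω h1 h2
    simp only [hN1_def, Set.mem_iInter, Set.mem_iUnion, not_forall, not_exists] at h1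
    obtain ⟨N0, hN0⟩ := h1
    simp only [hN2_def, Set.mem_iUnion, Set.mem_iInter, not_exists, not_forall] at h2
    have hXb : ∀ n, N0 ≤ n → |X n ω| ≤ rr a n := by
      intro n hn
      have := hN0 (n - N0)
      rw [Nat.sub_add_cancel hn] at this
      simp only [hA_def, Set.mem_setOf_eq, not_lt] at this
      exact this
    set C0 : ℝ := ∑ i ∈ Finset.range N0, |X i ω| with hC0_def
    have hC0nn : 0 ≤ C0 := Finset.sum_nonneg fun i _ => abs_nonneg _
    have hSb : ∀ n : ℕ, |∑ i ∈ Finset.range n, X i ω| ≤ C0 + T n ω := by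
      intro n
      refine le_trans (Finset.abs_sum_le_sum_abs _ _) ?_
      rw [← Finset.sum_filter_add_sum_filter_not (Finset.range n) (fun i => i < N0)]
      have hfirst : ∑ i ∈ (Finset.range n).filter (fun i => i < N0), |X i ω| ≤ C0 := by
        refine Finset.sum_le_sum_of_subset_of_nonneg ?_ (fun i _ _ => abs_nonneg _)
        intro i hi
        simp only [Finset.mem_filter, Finset.mem_range] at hi
        exact Finset.mem_range.2 hi.2
      have hsecond : ∑ i ∈ (Finset.range n).filter (fun i => ¬ i < N0), |X i ω| ≤ T n ω := by
        have heach : ∀ i ∈ (Finset.range n).filter (fun i => ¬ i < N0),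
            |X i ω| = min |X i ω| (rr a i) := by
          intro i hi
          simp only [Finset.mem_filter, Finset.mem_range, not_lt] at hi
          exact (min_eq_left (hXb i hi.2)).symm
        rw [Finset.sum_congr rfl heach]
        refine Finset.sum_le_sum_of_subset_of_nonneg (Finset.filter_subset _ _)
          fun i _ _ => hmin0 i ω
      linarith
    have hrtop : Filter.Tendsto (fun n : ℕ => rr a n) Filter.atTop Filter.atTop :=
      (tendsto_rpow_atTop ha0).comp tendsto_natCast_atTop_atTop
    have hgoal : Filter.Tendsto (fun n : ℕ => (C0 + T n ω) / rr a n) Filter.atTop (nhds 0) := by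
      rw [Metric.tendsto_atTop]
      intro ε hε
      obtain ⟨m, hm⟩ := exists_nat_gt (2 / ε)
      have hminv : ((m : ℝ) + 1)⁻¹ < ε / 2 := by
        rw [inv_lt_comm₀ (by positivity) (by positivity)]
        have : (2:ℝ) / ε = (ε / 2)⁻¹ := by
          rw [div_eq_mul_inv, div_eq_mul_inv]
          field_simp
        linarith [hm]
      obtain ⟨K0, hK0⟩ := h2 m
      have hC0t : Filter.Tendsto (fun n : ℕ => C0 / rr a n) Filter.atTop (nhds 0) :=
        Filter.Tendsto.div_atTop tendsto_const_nhds hrtop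
      have hev : ∀ᶠ n : ℕ in Filter.atTop, C0 / rr a n < ε / 2 :=
        hC0t.eventually (gt_mem_nhds (half_pos hε))
      obtain ⟨N1', hN1'⟩ := Filter.eventually_atTop.1 hev
      refine ⟨max N1' (2 ^ K0), fun n hn => ?_⟩
      have hnN1 : N1' ≤ n := le_trans (le_max_left _ _) hn
      have hn2K : 2 ^ K0 ≤ n := le_trans (le_max_right _ _) hn
      have hn1 : 1 ≤ n := le_trans (Nat.one_le_two_pow) hn2K
      have hrpos : 0 < rr a n := rr_pos ha0 hn1
      set k := Nat.log 2 n with hk_def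
      have hklow : 2 ^ k ≤ n := Nat.pow_log_le_self 2 (by omega)
      have hkhi : n < 2 ^ (k + 1) := Nat.lt_pow_succ_log_self (by norm_num) n
      have hkK0 : K0 ≤ k := by
        have := Nat.log_mono_right (b := 2) hn2K
        rwa [Nat.log_pow (by norm_num)] at this
      have hCk := hK0 (k - K0)
      rw [Nat.sub_add_cancel hkK0] at hCk
      simp only [hC_def, Set.mem_setOf_eq, not_le] at hCk
      have hTn : T n ω < ((m : ℝ) + 1)⁻¹ * rr a n := by
        have h3 : rr a (2 ^ k) ≤ rr a n := rr_mono ha0 hklow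
        have h4 : T n ω ≤ T (2 ^ (k + 1)) ω := hTmono ω hkhi.le
        have h5 : ((m : ℝ) + 1)⁻¹ * rr a (2 ^ k) ≤ ((m : ℝ) + 1)⁻¹ * rr a n :=
          mul_le_mul_of_nonneg_left h3 (by positivity)
        linarith
      have hval : (C0 + T n ω) / rr a n < ε := by
        rw [add_div]
        have hT2 : T n ω / rr a n < ε / 2 := by
          rw [div_lt_iff₀ hrpos]
          calc T n ω < ((m : ℝ) + 1)⁻¹ * rr a n := hTn
            _ ≤ ε / 2 * rr a n := by
                refine mul_le_mul_of_nonneg_right hminv.le hrpos.le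
          
        have hC2 : C0 / rr a n < ε / 2 := hN1' n hnN1
        linarith
      rw [Real.dist_eq, sub_zero,
        abs_of_nonneg (div_nonneg (add_nonneg hC0nn (hT0 n ω)) hrpos.le)]
      exact hval
    refine squeeze_zero_norm' ?_ hgoal
    filter_upwards [Filter.eventually_ge_atTop 1] with n hn
    have hrpos : 0 < rr a n := rr_pos ha0 hn
    rw [Real.norm_eq_abs, abs_div, abs_of_pos hrpos]
    exact div_le_div_of_nonneg_right (hSb n) hrpos.le
  -- conclusion
  refine le_antisymm ?_ (V_nonneg sl _)
  have hsub : {ω | ¬ Filter.Tendsto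
        (fun n : ℕ => (∑ i ∈ Finset.range n, X i ω) / (n : ℝ) ^ a)
        Filter.atTop (nhds 0)} ⊆ N1 ∪ N2 := by
    intro ω hω
    by_contra hc
    simp only [Set.mem_union, not_or] at hc
    exact hω (hpath ω hc.1 hc.2)
  calc upperCapacity sl {ω | ¬ Filter.Tendsto
        (fun n : ℕ => (∑ i ∈ Finset.range n, X i ω) / (n : ℝ) ^ a)
        Filter.atTop (nhds 0)}
      ≤ upperCapacity sl (N1 ∪ N2) := V_mono sl hsub
    _ ≤ upperCapacity sl N1 + upperCapacity sl N2 := V_union_le sl _ _ hV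
    _ = 0 := by rw [hN1, hN2', add_zero]
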